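/- arXiv:1404.0452 — 3 statements merged into one kernel-verified Lean document; each statement's English description precedes it below -/
import Mathlib

section
/- Let m ≥ 2 be even and let A be a real m-th order n-dimensional symmetric tensor. Then A is positive semi-definite if and only if all of its H-eigenvalues are nonnegative, i.e., A xᵐ ≥ 0 for all x ∈ ℝⁿ if and only if every λ ∈ ℝ admitting a nonzero x ∈ ℝⁿ with A x^{m-1} = λ x^{[m-1]} satisfies λ ≥ 0. -/
open Finset

variable {m n : ℕ}

/-- The homogeneous form `A xᵐ` of an `m`-th order `n`-dimensional tensor `A`. -/
noncomputable def tApply (A : (Fin m → Fin n) → ℝ) (x : Fin n → ℝ) : ℝ :=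
  ∑ f : Fin m → Fin n, A f * ∏ j, x (f j)

/-- A tensor is symmetric if its entries are invariant under any permutation of the indices. -/
def IsSymmT (A : (Fin m → Fin n) → ℝ) : Prop :=
  ∀ (σ : Equiv.Perm (Fin m)) (f : Fin m → Fin n), A (f ∘ σ) = A f

/-- The `i`-th component of the vector `A x^{m-1}`:
`Σ_{i₂,…,i_m} a_{i i₂ ⋯ i_m} x_{i₂} ⋯ x_{i_m}`. -/
noncomputable def tVec [NeZero m] (A : (Fin m → Fin n) → ℝ) (x : Fin n → ℝ) (i : Fin n) : ℝ :=
  ∑ f ∈ univ.filter (fun f : Fin m → Fin n => f 0 = i),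
    A f * ∏ j ∈ univ.erase (0 : Fin m), x (f j)

/-- The `i`-th component of the vector `A x^{m-1}` for complex `x`. -/
noncomputable def tVecC [NeZero m] (A : (Fin m → Fin n) → ℝ) (x : Fin n → ℂ) (i : Fin n) : ℂ :=
  ∑ f ∈ univ.filter (fun f : Fin m → Fin n => f 0 = i),
    (A f : ℂ) * ∏ j ∈ univ.erase (0 : Fin m), x (f j)

/-- The sum of the absolute values of the off-diagonal entries in the `i`-th row of `A`. -/
noncomputable def offDiagSum [NeZero m] (A : (Fin m → Fin n) → ℝ) (i : Fin n) : ℝ :=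
  ∑ f ∈ univ.filter (fun f : Fin m → Fin n => f 0 = i ∧ f ≠ (fun _ => i)), |A f|

/-- A diagonally dominated tensor. -/
def DiagDom [NeZero m] (A : (Fin m → Fin n) → ℝ) : Prop :=
  ∀ i : Fin n, offDiagSum A i ≤ A (fun _ => i)

/-- A strictly diagonally dominated tensor. -/
def StrictDiagDom [NeZero m] (A : (Fin m → Fin n) → ℝ) : Prop :=
  ∀ i : Fin n, offDiagSum A i < A (fun _ => i)

/-- The sum of all the entries in the `i`-th row of `A`. -/
noncomputable def rowSum [NeZero m] (A : (Fin m → Fin n) → ℝ) (i : Fin n) : ℝ :=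
  ∑ f ∈ univ.filter (fun f : Fin m → Fin n => f 0 = i), A f

/-- A B₀ tensor. -/
def IsB0 [NeZero m] (A : (Fin m → Fin n) → ℝ) : Prop :=
  ∀ i : Fin n, 0 ≤ rowSum A i ∧
    ∀ f : Fin m → Fin n, f 0 = i → f ≠ (fun _ => i) →
      A f ≤ (1 / (n : ℝ) ^ (m - 1)) * rowSum A i

/-- A B tensor. -/
def IsB [NeZero m] (A : (Fin m → Fin n) → ℝ) : Prop :=
  ∀ i : Fin n, 0 < rowSum A i ∧
    ∀ f : Fin m → Fin n, f 0 = i → f ≠ (fun _ => i) →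
      A f < (1 / (n : ℝ) ^ (m - 1)) * rowSum A i

/-- A Z tensor: all off-diagonal entries are non-positive. -/
def IsZ [NeZero m] (A : (Fin m → Fin n) → ℝ) : Prop :=
  ∀ (i : Fin n) (f : Fin m → Fin n), f 0 = i → f ≠ (fun _ => i) → A f ≤ 0

/-- The partially all one tensor `E^J`. -/
noncomputable def allOne (m : ℕ) {n : ℕ} (J : Finset (Fin n)) : (Fin m → Fin n) → ℝ :=
  fun f => if ∀ j, f j ∈ J then 1 else 0

/-- `Ĵ(B)`: the set of rows of `B` with at least one positive off-diagonal entry. -/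
noncomputable def hatJ [NeZero m] (B : (Fin m → Fin n) → ℝ) : Finset (Fin n) :=
  univ.filter fun i => ∃ f : Fin m → Fin n, f 0 = i ∧ f ≠ (fun _ => i) ∧ 0 < B f

/-!
On the level set `S = {x | ∑ xᵢᵐ = 1}`, which is compact because `m` is even, the form `A xᵐ`
attains its minimum `λ` at some `x₀`. By homogeneity `A zᵐ - λ ∑ zᵢᵐ ≥ 0` for every `z`, with
equality at `x₀`; so `x₀` is a critical point of this function, and since `A` is symmetric its
gradient there is `m (A x₀^{m-1} - λ x₀^{[m-1]})`. Hence `λ` is an H-eigenvalue, and if all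
H-eigenvalues are nonnegative then `A zᵐ ≥ λ ∑ zᵢᵐ ≥ 0`. Conversely, pairing an eigenvector
`x` with the eigen-equation gives `A xᵐ = λ ∑ xᵢᵐ`, where `∑ xᵢᵐ > 0`.
-/

section PowerSum

variable {ι : Type*} [Fintype ι] {m : ℕ}

lemma sum_pow_pos_of_ne_zero (hm : Even m) {x : ι → ℝ} (hx : x ≠ 0) : 0 < ∑ i, x i ^ m := by
  obtain ⟨i, hi⟩ := Function.ne_iff.1 hx
  exact Finset.sum_pos' (fun k _ => hm.pow_nonneg _) ⟨i, Finset.mem_univ i, hm.pow_pos hi⟩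

lemma ne_zero_of_sum_pow_eq_one (hm0 : m ≠ 0) {x : ι → ℝ} (hx : ∑ i, x i ^ m = 1) : x ≠ 0 := by
  rintro rfl
  simp [zero_pow hm0] at hx

lemma isCompact_setOf_sum_pow_eq_one (hm : Even m) (hm0 : m ≠ 0) :
    IsCompact {x : ι → ℝ | ∑ i, x i ^ m = 1} := by
  refine Metric.isCompact_of_isClosed_isBounded
    (isClosed_eq (by fun_prop) continuous_const) ?_
  refine (Metric.isBounded_closedBall (x := (0 : ι → ℝ)) (r := 1)).subset fun x hx => ?_
  rw [Metric.mem_closedBall, dist_zero_right, pi_norm_le_iff_of_nonneg zero_le_one]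
  intro i
  have hxi : |x i| ^ m ≤ 1 := by
    rw [pow_abs, abs_of_nonneg (hm.pow_nonneg _), ← show ∑ k, x k ^ m = 1 from hx]
    exact Finset.single_le_sum (f := fun k => x k ^ m) (fun k _ => hm.pow_nonneg _)
      (Finset.mem_univ i)
  simpa using (pow_le_one_iff_of_nonneg (abs_nonneg _) hm0).1 hxi

lemma exists_pow_mul_eq_one (hm0 : m ≠ 0) {s : ℝ} (hs : 0 < s) : ∃ c : ℝ, c ^ m * s = 1 := by
  refine ⟨s ^ (-1 / m : ℝ), ?_⟩
  rw [← Real.rpow_natCast, ← Real.rpow_mul hs.le, div_mul_cancel₀ _ (Nat.cast_ne_zero.2 hm0),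
    Real.rpow_neg_one, inv_mul_cancel₀ hs.ne']

lemma exists_sum_pow_eq_one_forall_mul_sum_pow_le [Nonempty ι] {f : (ι → ℝ) → ℝ}
    (hf : Continuous f) (hfm : ∀ (c : ℝ) x, f (c • x) = c ^ m * f x) (hm : Even m)
    (hm0 : m ≠ 0) :
    ∃ x₀ : ι → ℝ, ∑ i, x₀ i ^ m = 1 ∧ ∀ z, f x₀ * ∑ i, z i ^ m ≤ f z := by
  have hS : {x : ι → ℝ | ∑ i, x i ^ m = 1}.Nonempty := by
    classical
    exact ⟨Pi.single (Classical.arbitrary ι) 1,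
      by simp [Pi.single_apply, ite_pow, zero_pow hm0]⟩
  obtain ⟨x₀, hx₀, hmin⟩ :=
    (isCompact_setOf_sum_pow_eq_one hm hm0).exists_isMinOn hS hf.continuousOn
  refine ⟨x₀, hx₀, fun z => ?_⟩
  rcases eq_or_ne z 0 with rfl | hz
  · simpa [zero_pow hm0] using (hfm 0 0).ge
  have hs := sum_pow_pos_of_ne_zero hm hz
  obtain ⟨c, hc⟩ := exists_pow_mul_eq_one hm0 hs
  have hcz : f x₀ ≤ c ^ m * f z := by
    rw [← hfm]
    exact hmin (by simpa [mul_pow, ← Finset.mul_sum] using hc)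
  calc f x₀ * ∑ i, z i ^ m ≤ c ^ m * f z * ∑ i, z i ^ m := by gcongr
    _ = f z := by rw [mul_right_comm, hc, one_mul]

lemma hasDerivAt_sum_pow_add_smul (x v : ι → ℝ) :
    HasDerivAt (fun t : ℝ => ∑ i, (x + t • v) i ^ m) (m * ∑ i, v i * x i ^ (m - 1)) 0 := by
  have hterm (i : ι) : HasDerivAt (fun t : ℝ => (x i + t * v i) ^ m)
      (m * (v i * x i ^ (m - 1))) 0 := by
    simpa [mul_comm, mul_left_comm] using
      ((hasDerivAt_mul_const (x := (0 : ℝ)) (v i)).const_add (x i)).fun_pow m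
  simpa [Finset.mul_sum] using HasDerivAt.fun_sum fun i _ => hterm i

end PowerSum

section Tensor

variable {m n : ℕ} (A : (Fin m → Fin n) → ℝ)

lemma continuous_tApply : Continuous (tApply A) := by
  unfold tApply
  fun_prop

lemma tApply_smul (c : ℝ) (x : Fin n → ℝ) : tApply A (c • x) = c ^ m * tApply A x := by
  simp only [tApply, Finset.mul_sum, Pi.smul_apply, smul_eq_mul, Finset.prod_mul_distrib,
    Finset.prod_const, Finset.card_univ, Fintype.card_fin]
  exact Finset.sum_congr rfl fun f _ => by ring

variable [NeZero m]

lemma sum_mul_tVec (v x : Fin n → ℝ) :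
    ∑ i, v i * tVec A x i = ∑ f, A f * (v (f 0) * ∏ j ∈ univ.erase 0, x (f j)) := by
  rw [← Finset.sum_fiberwise univ (fun f : Fin m → Fin n => f 0)
    (fun f => A f * (v (f 0) * ∏ j ∈ univ.erase 0, x (f j)))]
  refine Finset.sum_congr rfl fun i _ => ?_
  rw [tVec, Finset.mul_sum]
  refine Finset.sum_congr rfl fun f hf => ?_
  rw [(Finset.mem_filter.1 hf).2]
  ring

lemma tApply_eq_sum_mul_tVec (x : Fin n → ℝ) : tApply A x = ∑ i, x i * tVec A x i := by
  rw [sum_mul_tVec, tApply]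
  refine Finset.sum_congr rfl fun f _ => ?_
  rw [← Finset.mul_prod_erase univ (fun j => x (f j)) (Finset.mem_univ 0)]

lemma tApply_eq_mul_sum_pow_of_tVec_eq {lam : ℝ} {x : Fin n → ℝ}
    (h : ∀ i, tVec A x i = lam * x i ^ (m - 1)) : tApply A x = lam * ∑ i, x i ^ m := by
  rw [tApply_eq_sum_mul_tVec, Finset.mul_sum]
  refine Finset.sum_congr rfl fun i _ => ?_
  rw [h, mul_left_comm, mul_pow_sub_one (NeZero.ne m)]

variable {A}

lemma sum_mul_prod_erase_of_isSymmT (hA : IsSymmT A) (v x : Fin n → ℝ) (j : Fin m) :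
    ∑ f, A f * (v (f j) * ∏ k ∈ univ.erase j, x (f k)) = ∑ i, v i * tVec A x i := by
  rw [sum_mul_tVec]
  let σ := Equiv.swap 0 j
  refine Fintype.sum_bijective (· ∘ σ) (Function.Involutive.bijective fun f => by ext; simp [σ])
    _ _ fun f => ?_
  have hprod : ∏ k ∈ univ.erase j, x (f k) = ∏ k ∈ univ.erase 0, x (f (σ k)) := by
    refine (Finset.prod_equiv σ (fun k => ?_) fun k _ => rfl).symm
    simp [σ, Equiv.swap_apply_eq_iff]
  rw [hA σ f, hprod]
  simp [σ]

lemma hasDerivAt_tApply_add_smul (hA : IsSymmT A) (x v : Fin n → ℝ) :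
    HasDerivAt (fun t : ℝ => tApply A (x + t • v)) (m * ∑ i, v i * tVec A x i) 0 := by
  have hterm (f : Fin m → Fin n) : HasDerivAt (fun t : ℝ => A f * ∏ j, (x + t • v) (f j))
      (A f * ∑ j, v (f j) * ∏ k ∈ univ.erase j, x (f k)) 0 := by
    have := (HasDerivAt.fun_finsetProd (u := univ) fun j _ =>
      (hasDerivAt_mul_const (x := (0 : ℝ)) (v (f j))).const_add (x (f j))).const_mul (A f)
    simpa [mul_comm] using this
  refine (HasDerivAt.fun_sum fun f _ => hterm f).congr_deriv (Eq.symm ?_)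
  calc (m : ℝ) * ∑ i, v i * tVec A x i
      = ∑ j : Fin m, ∑ f, A f * (v (f j) * ∏ k ∈ univ.erase j, x (f k)) := by
        simp [sum_mul_prod_erase_of_isSymmT hA]
    _ = _ := by rw [Finset.sum_comm]; simp only [Finset.mul_sum]

lemma tVec_eq_mul_pow_of_forall_mul_sum_pow_le (hA : IsSymmT A) {lam : ℝ}
    {x : Fin n → ℝ} (hle : ∀ z, lam * ∑ i, z i ^ m ≤ tApply A z)
    (heq : tApply A x = lam * ∑ i, x i ^ m) (i : Fin n) :
    tVec A x i = lam * x i ^ (m - 1) := by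
  classical
  let e : Fin n → ℝ := Pi.single i 1
  have hmin : IsLocalMin (fun t : ℝ => tApply A (x + t • e) - lam * ∑ k, (x + t • e) k ^ m) 0 :=
    Filter.Eventually.of_forall fun t => by
      simpa [heq] using hle (x + t • e)
  have hcrit := hmin.hasDerivAt_eq_zero <|
    (hasDerivAt_tApply_add_smul hA x _).sub ((hasDerivAt_sum_pow_add_smul x _).const_mul lam)
  simp only [e, Pi.single_apply, ite_mul, one_mul, zero_mul, Finset.sum_ite_eq', Finset.mem_univ,
    ↓reduceIte] at hcrit
  have hm : (m : ℝ) ≠ 0 := Nat.cast_ne_zero.2 (NeZero.ne m)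
  have hfactor : (m : ℝ) * (tVec A x i - lam * x i ^ (m - 1)) = 0 := by linear_combination hcrit
  exact sub_eq_zero.1 ((mul_eq_zero.1 hfactor).resolve_left hm)

end Tensor

theorem psd_iff_all_H_eigenvalues_nonneg_general
    {m n : ℕ} [NeZero m] (hmeven : Even m)
    (A : (Fin m → Fin n) → ℝ) (hA : IsSymmT A) :
    (∀ x : Fin n → ℝ, 0 ≤ tApply A x) ↔
      ∀ (lam : ℝ) (x : Fin n → ℝ), x ≠ 0 →
        (∀ i : Fin n, tVec A x i = lam * x i ^ (m - 1)) → 0 ≤ lam := by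
  have hm0 : m ≠ 0 := NeZero.ne m
  refine ⟨fun hpsd lam x hx heig => ?_, fun heig z => ?_⟩
  · have hx' := hpsd x
    rw [tApply_eq_mul_sum_pow_of_tVec_eq A heig] at hx'
    exact nonneg_of_mul_nonneg_left hx' (sum_pow_pos_of_ne_zero hmeven hx)
  · rcases isEmpty_or_nonempty (Fin n) with _ | _
    · simpa [Subsingleton.elim z 0, zero_pow hm0] using (tApply_smul A 0 0).ge
    obtain ⟨x₀, hx₀, hle⟩ := exists_sum_pow_eq_one_forall_mul_sum_pow_le
      (continuous_tApply A) (tApply_smul A) hmeven hm0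
    have hlam : 0 ≤ tApply A x₀ := heig _ x₀ (ne_zero_of_sum_pow_eq_one hm0 hx₀)
      (tVec_eq_mul_pow_of_forall_mul_sum_pow_le hA hle (by rw [hx₀, mul_one]))
    exact (mul_nonneg hlam (Finset.sum_nonneg fun i _ => hmeven.pow_nonneg _)).trans (hle z)

/-- An even order real symmetric tensor is positive semi-definite iff all of its
H-eigenvalues are nonnegative. -/
theorem psd_iff_all_H_eigenvalues_nonneg
    {m n : ℕ} [NeZero m] (hm : 2 ≤ m) (hmeven : Even m) (hn : 1 ≤ n)
    (A : (Fin m → Fin n) → ℝ) (hA : IsSymmT A) :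
    (∀ x : Fin n → ℝ, 0 ≤ tApply A x) ↔
      ∀ (lam : ℝ) (x : Fin n → ℝ), x ≠ 0 →
        (∀ i : Fin n, tVec A x i = lam * x i ^ (m - 1)) → 0 ≤ lam :=
  psd_iff_all_H_eigenvalues_nonneg_general hmeven A hA
end

section
/- Let m ≥ 2 be even and let B be a real m-th order n-dimensional symmetric B₀ tensor. Then every H-eigenvalue of B is nonnegative: if λ ∈ ℝ and x ∈ ℝⁿ is nonzero with B x^{m-1} = λ x^{[m-1]}, then λ ≥ 0. -/
open Finset

variable {m n : ℕ}

lemma my_amgm (hm : m ≠ 0) (a : Fin m → ℝ) (ha : ∀ j, 0 ≤ a j) :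
    ∏ j, a j ≤ (1 / (m : ℝ)) * ∑ j, a j ^ m := by
  have key := Real.geom_mean_le_arith_mean_weighted univ (fun _ : Fin m => 1 / (m : ℝ))
    (fun j => a j ^ m) (fun _ _ => by positivity)
    (by rw [Finset.sum_const, card_univ, Fintype.card_fin, nsmul_eq_mul]
        field_simp)
    (fun j _ => pow_nonneg (ha j) m)
  have h1 : ∀ j : Fin m, (a j ^ m : ℝ) ^ (1 / (m:ℝ)) = a j := by
    intro j
    rw [← Real.rpow_natCast (a j) m, ← Real.rpow_mul (ha j), mul_one_div,
      div_self (by exact_mod_cast hm), Real.rpow_one]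
  calc ∏ j, a j = ∏ j, ((a j ^ m : ℝ) ^ (1/(m:ℝ))) := by simp only [h1]
    _ ≤ ∑ j, (1/(m:ℝ)) * a j ^ m := key
    _ = (1/(m:ℝ)) * ∑ j, a j ^ m := by rw [Finset.mul_sum]

-- tApply as sum over rows

lemma tApply_eq [NeZero m] (B : (Fin m → Fin n) → ℝ) (x : Fin n → ℝ) :
    tApply B x = ∑ i, x i * tVec B x i := by
  unfold tApply tVec
  rw [← Finset.sum_fiberwise univ (fun f : Fin m → Fin n => f 0)
      (fun f => B f * ∏ j, x (f j))]
  refine Finset.sum_congr rfl fun i _ => ?_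
  rw [Finset.mul_sum]
  refine Finset.sum_congr rfl fun f hf => ?_
  simp only [mem_filter] at hf
  rw [← Finset.mul_prod_erase univ _ (Finset.mem_univ (0 : Fin m)), hf.2]
  ring

-- tApply of the partially all one tensor

lemma tApply_allOne (J : Finset (Fin n)) (x : Fin n → ℝ) :
    tApply (allOne m J) x = (∑ j ∈ J, x j) ^ m := by
  classical
  unfold tApply allOne
  have hfil : univ.filter (fun f : Fin m → Fin n => ∀ j, f j ∈ J)
      = Fintype.piFinset (fun _ : Fin m => J) := by
    ext f; simp [Fintype.mem_piFinset]
  calc ∑ f : Fin m → Fin n, (if ∀ j, f j ∈ J then (1:ℝ) else 0) * ∏ j, x (f j)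
      = ∑ f ∈ univ.filter (fun f : Fin m → Fin n => ∀ j, f j ∈ J), ∏ j, x (f j) := by
        rw [Finset.sum_filter]
        refine Finset.sum_congr rfl fun f _ => ?_
        split <;> simp
    _ = ∑ f ∈ Fintype.piFinset (fun _ : Fin m => J), ∏ j, x (f j) := by rw [hfil]
    _ = (∑ j ∈ J, x j) ^ m := by
        rw [← Finset.prod_univ_sum]
        simp

-- counting

lemma card_row [NeZero m] (i : Fin n) :
    (univ.filter fun f : Fin m → Fin n => f 0 = i).card = n ^ (m - 1) := by
  classical
  have hfil : (univ.filter fun f : Fin m → Fin n => f 0 = i)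
      = Fintype.piFinset (fun j : Fin m => if j = 0 then {i} else univ) := by
    ext f
    simp only [mem_filter, mem_univ, true_and, Fintype.mem_piFinset]
    constructor
    · intro h j
      by_cases hj : j = 0 <;> simp [hj, h]
    · intro h
      have := h 0
      simpa using this
  rw [hfil, Fintype.card_piFinset]
  have h2 : ∀ j : Fin m, ((if j = 0 then ({i} : Finset (Fin n)) else univ).card)
      = if j = 0 then 1 else n := by
    intro j; by_cases hj : j = 0 <;> simp [hj]
  rw [Finset.prod_congr rfl (fun j _ => h2 j)]
  rw [← Finset.mul_prod_erase univ _ (Finset.mem_univ (0 : Fin m))]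
  rw [if_pos rfl, one_mul]
  have h3 : ∀ j ∈ univ.erase (0 : Fin m), (if j = 0 then 1 else n) = n := by
    intro j hj; rw [if_neg (Finset.mem_erase.1 hj).1]
  rw [Finset.prod_congr rfl h3, Finset.prod_const, Finset.card_erase_of_mem (mem_univ _),
    card_univ, Fintype.card_fin]

lemma rowSum_split [NeZero m] (B : (Fin m → Fin n) → ℝ) (i : Fin n) :
    rowSum B i = B (fun _ => i)
      + ∑ f ∈ univ.filter (fun f : Fin m → Fin n => f 0 = i ∧ f ≠ (fun _ => i)), B f := by
  classical
  unfold rowSum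
  have hmem : (fun _ => i) ∈ univ.filter (fun f : Fin m → Fin n => f 0 = i) := by simp
  rw [← Finset.add_sum_erase _ _ hmem]
  congr 1
  apply Finset.sum_congr _ (fun _ _ => rfl)
  ext f
  simp only [mem_erase, mem_filter, mem_univ, true_and]
  tauto

lemma psd_of_Z [NeZero m] (hmeven : Even m) (B : (Fin m → Fin n) → ℝ)
    (hsym : IsSymmT B) (hrow : ∀ i, 0 ≤ rowSum B i)
    (hZ : ∀ f : Fin m → Fin n, f ≠ (fun _ => f 0) → B f ≤ 0)
    (x : Fin n → ℝ) : 0 ≤ tApply B x := by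
  classical
  have hm0 : m ≠ 0 := NeZero.ne m
  set a : Fin n → ℝ := fun i => |x i| with ha_def
  have ha : ∀ i, 0 ≤ a i := fun i => abs_nonneg _
  set P : (Fin m → Fin n) → Prop := fun f => f = fun _ => f 0 with hP
  set N : Finset (Fin m → Fin n) := univ.filter (fun f => ¬ P f) with hN
  -- split into diagonal and non-diagonal parts
  have hsplit : tApply B x
      = ∑ f ∈ univ.filter P, B f * ∏ j, x (f j)
        + ∑ f ∈ N, B f * ∏ j, x (f j) := by
    rw [hN, Finset.sum_filter_add_sum_filter_not]
    rfl
  -- diagonal part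
  have himg : univ.filter P = univ.image (fun i : Fin n => (fun _ => i : Fin m → Fin n)) := by
    ext f
    simp only [hP, mem_filter, mem_univ, true_and, mem_image]
    constructor
    · intro h; exact ⟨f 0, h.symm⟩
    · rintro ⟨i, _, rfl⟩; rfl
  have hdiag : ∑ f ∈ univ.filter P, B f * ∏ j, x (f j)
      = ∑ i, B (fun _ => i) * x i ^ m := by
    rw [himg, Finset.sum_image (by intro i _ j _ h; exact congrFun h 0)]
    refine Finset.sum_congr rfl fun i _ => ?_
    rw [Finset.prod_const, card_univ, Fintype.card_fin]
  -- the key symmetry computation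
  have key3 : ∀ j : Fin m, ∑ f ∈ N, |B f| * a (f j) ^ m = ∑ i, offDiagSum B i * a i ^ m := by
    intro j
    rw [← Finset.sum_fiberwise N (fun f : Fin m → Fin n => f j)
      (fun f => |B f| * a (f j) ^ m)]
    refine Finset.sum_congr rfl fun i _ => ?_
    have hterm : ∀ f ∈ N.filter (fun f : Fin m → Fin n => f j = i),
        |B f| * a (f j) ^ m = |B f| * a i ^ m := by
      intro f hf
      rw [(Finset.mem_filter.1 hf).2]
    rw [Finset.sum_congr rfl hterm, ← Finset.sum_mul]
    congr 1
    unfold offDiagSum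
    refine Finset.sum_nbij' (fun f => f ∘ Equiv.swap (0 : Fin m) j)
      (fun f => f ∘ Equiv.swap (0 : Fin m) j) ?_ ?_ ?_ ?_ ?_
    · intro f hf
      simp only [hN, hP, Finset.mem_filter, Finset.mem_univ, true_and] at hf ⊢
      obtain ⟨hnd, hfj⟩ := hf
      constructor
      · simpa [Equiv.swap_apply_left] using hfj
      · intro hcon
        apply hnd
        have hfi : f = fun _ => i := by
          funext k
          have h1 := congrFun hcon (Equiv.swap (0 : Fin m) j k)
          simpa [Equiv.swap_apply_self] using h1
        have hf0 : f 0 = i := by rw [hfi]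
        rw [hfi]
    · intro g hg
      simp only [hN, hP, Finset.mem_filter, Finset.mem_univ, true_and] at hg ⊢
      obtain ⟨hg0, hgne⟩ := hg
      constructor
      · intro hcon
        apply hgne
        have hc : ∀ k, g k = g j := by
          intro k
          have h1 := congrFun hcon (Equiv.swap (0 : Fin m) j k)
          simpa [Equiv.swap_apply_self, Equiv.swap_apply_left] using h1
        have hgj : g j = i := by rw [← hc 0, hg0]
        funext k
        rw [hc k, hgj]
      · simpa [Equiv.swap_apply_right] using hg0
    · intro f _
      funext k; simp [Equiv.swap_apply_self]
    · intro g _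
      funext k; simp [Equiv.swap_apply_self]
    · intro f _
      rw [hsym (Equiv.swap (0 : Fin m) j) f]
  -- lower bound for the non-diagonal part
  have step1 : ∀ f ∈ N, -(|B f| * ((1/(m:ℝ)) * ∑ j, a (f j) ^ m)) ≤ B f * ∏ j, x (f j) := by
    intro f _
    have h2 : ∏ j, a (f j) ≤ (1/(m:ℝ)) * ∑ j, a (f j) ^ m :=
      my_amgm hm0 _ (fun j => ha _)
    have h3 : |B f| * ∏ j, a (f j) ≤ |B f| * ((1/(m:ℝ)) * ∑ j, a (f j)^m) :=
      mul_le_mul_of_nonneg_left h2 (abs_nonneg _)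
    have h4 := neg_abs_le (B f * ∏ j, x (f j))
    have h1 : |B f * ∏ j, x (f j)| = |B f| * ∏ j, a (f j) := by
      rw [abs_mul, Finset.abs_prod]
    rw [h1] at h4
    linarith
  have h7 : ∑ f ∈ N, |B f| * ((1/(m:ℝ)) * ∑ j, a (f j) ^ m)
      = ∑ i, offDiagSum B i * a i ^ m := by
    have hsw : ∀ f, |B f| * ((1/(m:ℝ)) * ∑ j, a (f j)^m)
        = ∑ j, (1/(m:ℝ)) * (|B f| * a (f j)^m) := by
      intro f
      rw [Finset.mul_sum, Finset.mul_sum]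
      exact Finset.sum_congr rfl fun j _ => by ring
    rw [Finset.sum_congr rfl (fun f _ => hsw f), Finset.sum_comm]
    have : ∀ j : Fin m, ∑ f ∈ N, (1/(m:ℝ)) * (|B f| * a (f j)^m)
        = (1/(m:ℝ)) * ∑ i, offDiagSum B i * a i ^ m := by
      intro j
      rw [← Finset.mul_sum, key3 j]
    rw [Finset.sum_congr rfl (fun j _ => this j), Finset.sum_const, card_univ,
      Fintype.card_fin, nsmul_eq_mul]
    field_simp
  have step2 : -(∑ i, offDiagSum B i * a i ^ m) ≤ ∑ f ∈ N, B f * ∏ j, x (f j) := by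
    have h5 := Finset.sum_le_sum step1
    rw [Finset.sum_neg_distrib, h7] at h5
    exact h5
  -- diagonal dominance
  have hdom : ∀ i, B (fun _ => i) - offDiagSum B i = rowSum B i := by
    intro i
    have hoff : offDiagSum B i
        = -(∑ f ∈ univ.filter (fun f : Fin m → Fin n => f 0 = i ∧ f ≠ (fun _ => i)), B f) := by
      rw [← Finset.sum_neg_distrib]
      refine Finset.sum_congr rfl fun f hf => ?_
      simp only [Finset.mem_filter, Finset.mem_univ, true_and] at hf
      have : B f ≤ 0 := by
        apply hZ
        rw [hf.1]
        exact hf.2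
      exact abs_of_nonpos this
    rw [rowSum_split B i, hoff]
    ring
  have hfinal : 0 ≤ ∑ i, (B (fun _ => i) - offDiagSum B i) * a i ^ m := by
    refine Finset.sum_nonneg fun i _ => mul_nonneg ?_ (pow_nonneg (ha i) m)
    rw [hdom i]; exact hrow i
  have habs : ∀ i : Fin n, x i ^ m = a i ^ m := fun i => (hmeven.pow_abs (x i)).symm
  rw [hsplit, hdiag]
  have hsum : ∑ i, (B (fun _ => i) - offDiagSum B i) * a i ^ m
      = ∑ i, B (fun _ => i) * x i ^ m - ∑ i, offDiagSum B i * a i ^ m := by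
    rw [← Finset.sum_sub_distrib]
    exact Finset.sum_congr rfl fun i _ => by rw [habs i]; ring
  rw [hsum] at hfinal
  linarith

lemma b0_psd [NeZero m] (hmeven : Even m) (hn : 1 ≤ n) :
    ∀ (N : ℕ) (B : (Fin m → Fin n) → ℝ), (hatJ B).card ≤ N → IsSymmT B → IsB0 B →
      ∀ x : Fin n → ℝ, 0 ≤ tApply B x := by
  intro N
  induction N with
  | zero =>
    intro B hcard hsym hB x
    have hJ : hatJ B = ∅ := Finset.card_eq_zero.1 (Nat.le_zero.1 hcard)
    apply psd_of_Z hmeven B hsym (fun i => (hB i).1)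
    intro f hf
    by_contra hpos
    push_neg at hpos
    have hmem : f 0 ∈ hatJ B := by
      simp only [hatJ, Finset.mem_filter, Finset.mem_univ, true_and]
      exact ⟨f, rfl, hf, hpos⟩
    rw [hJ] at hmem
    exact absurd hmem (Finset.notMem_empty _)
  | succ N ih =>
    intro B hcard hsym hB x
    by_cases hJne : (hatJ B).Nonempty
    swap
    · exact ih B (by rw [Finset.not_nonempty_iff_eq_empty.1 hJne]; simp) hsym hB x
    classical
    set J := hatJ B with hJdef
    have hout : ∀ g : Fin m → Fin n, g 0 ∉ J → g ≠ (fun _ => g 0) → B g ≤ 0 := by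
      intro g hg0 hgne
      by_contra hpos
      push_neg at hpos
      exact hg0 (by
        simp only [hJdef, hatJ, Finset.mem_filter, Finset.mem_univ, true_and]
        exact ⟨g, rfl, hgne, hpos⟩)
    have hneg : ∀ f : Fin m → Fin n, f ≠ (fun _ => f 0) → (¬ ∀ j, f j ∈ J) → B f ≤ 0 := by
      intro f hfne hnotall
      push_neg at hnotall
      obtain ⟨j, hj⟩ := hnotall
      have hkey : B (f ∘ Equiv.swap (0 : Fin m) j) = B f := hsym _ f
      rw [← hkey]
      apply hout
      · simpa [Equiv.swap_apply_left] using hj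
      · intro hcon
        apply hfne
        have hc : ∀ k, f k = f j := by
          intro k
          have h1 := congrFun hcon (Equiv.swap (0 : Fin m) j k)
          simpa [Equiv.swap_apply_self, Equiv.swap_apply_left] using h1
        funext k
        rw [hc k, ← hc 0]
    set S : Fin n → Finset (Fin m → Fin n) :=
      fun i => univ.filter (fun f : Fin m → Fin n => f 0 = i ∧ f ≠ (fun _ => i) ∧ 0 < B f)
      with hSdef
    have hSne : ∀ i ∈ J, (S i).Nonempty := by
      intro i hi
      simp only [hJdef, hatJ, Finset.mem_filter, Finset.mem_univ, true_and] at hi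
      obtain ⟨f, h1, h2, h3⟩ := hi
      exact ⟨f, by simp only [hSdef, Finset.mem_filter, Finset.mem_univ, true_and]
                   exact ⟨h1, h2, h3⟩⟩
    set d : Fin n → ℝ := fun i =>
      if hne : (S i).Nonempty then (S i).sup' hne B else 0 with hddef
    have hd_eq : ∀ (i : Fin n) (hi : i ∈ J), d i = (S i).sup' (hSne i hi) B := by
      intro i hi
      simp only [hddef, dif_pos (hSne i hi)]
    have hd_mem : ∀ i ∈ J, ∃ f ∈ S i, d i = B f := by
      intro i hi
      rw [hd_eq i hi]
      obtain ⟨f, hf, hfe⟩ := Finset.exists_mem_eq_sup' (hSne i hi) B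
      exact ⟨f, hf, hfe⟩
    have hd_ub : ∀ i ∈ J, ∀ f ∈ S i, B f ≤ d i := by
      intro i hi f hf
      rw [hd_eq i hi]
      exact Finset.le_sup' B hf
    set h : ℝ := J.inf' hJne d with hhdef
    obtain ⟨i₀, hi₀J, hi₀⟩ := Finset.exists_mem_eq_inf' hJne d
    have hh_le : ∀ i ∈ J, h ≤ d i := by
      intro i hi
      exact Finset.inf'_le d hi
    have hh_pos : 0 < h := by
      obtain ⟨f, hf, hfe⟩ := hd_mem i₀ hi₀J
      simp only [hSdef, Finset.mem_filter, Finset.mem_univ, true_and] at hf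
      rw [hhdef, hi₀, hfe]
      exact hf.2.2
    have hd_bound : ∀ i ∈ J, d i ≤ (1 / (n:ℝ) ^ (m-1)) * rowSum B i := by
      intro i hi
      obtain ⟨f, hf, hfe⟩ := hd_mem i hi
      simp only [hSdef, Finset.mem_filter, Finset.mem_univ, true_and] at hf
      rw [hfe]
      exact (hB i).2 f hf.1 hf.2.1
    have hh_bound : ∀ i ∈ J, h ≤ (1 / (n:ℝ) ^ (m-1)) * rowSum B i :=
      fun i hi => (hh_le i hi).trans (hd_bound i hi)
    set e : (Fin m → Fin n) → ℝ := allOne m J with hedef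
    set B' : (Fin m → Fin n) → ℝ := fun f => B f - h * e f with hB'def
    have he01 : ∀ f, 0 ≤ e f ∧ e f ≤ 1 := by
      intro f
      simp only [hedef, allOne]
      split <;> norm_num
    have he0 : ∀ f : Fin m → Fin n, (¬ ∀ j, f j ∈ J) → e f = 0 := by
      intro f hf
      simp only [hedef, allOne, if_neg hf]
    have he1 : ∀ f : Fin m → Fin n, (∀ j, f j ∈ J) → e f = 1 := by
      intro f hf
      simp only [hedef, allOne, if_pos hf]
    set c : Fin n → ℝ := fun i => ∑ f ∈ univ.filter (fun f : Fin m → Fin n => f 0 = i), e f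
      with hcdef
    have hrow' : ∀ i, rowSum B' i = rowSum B i - h * c i := by
      intro i
      unfold rowSum
      simp only [hB'def, hcdef]
      rw [Finset.sum_sub_distrib, Finset.mul_sum]
    have hc_le : ∀ i, c i ≤ (n:ℝ) ^ (m-1) := by
      intro i
      calc c i ≤ ∑ _f ∈ univ.filter (fun f : Fin m → Fin n => f 0 = i), (1:ℝ) :=
            Finset.sum_le_sum fun f _ => (he01 f).2
        _ = ((univ.filter (fun f : Fin m → Fin n => f 0 = i)).card : ℝ) := by
            rw [Finset.sum_const, nsmul_eq_mul, mul_one]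
        _ = (n:ℝ)^(m-1) := by rw [card_row i]; push_cast; ring
    have hnpow_pos : (0:ℝ) < (n:ℝ)^(m-1) := by
      have : (0:ℝ) < (n:ℝ) := by exact_mod_cast hn
      positivity
    have hc0 : ∀ i, i ∉ J → ∀ f : Fin m → Fin n, f 0 = i → e f = 0 := by
      intro i hi f hf0
      apply he0
      intro hall
      exact hi (hf0 ▸ hall 0)
    have hrow_eq : ∀ i, i ∉ J → rowSum B' i = rowSum B i := by
      intro i hi
      rw [hrow' i]
      have hz : c i = 0 := by
        simp only [hcdef]
        exact Finset.sum_eq_zero fun f hf => hc0 i hi f (Finset.mem_filter.1 hf).2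
      rw [hz, mul_zero, sub_zero]
    have hrowJ : ∀ i ∈ J, 0 ≤ rowSum B' i := by
      intro i hi
      rw [hrow' i]
      have hcn : 0 ≤ c i := Finset.sum_nonneg fun f _ => (he01 f).1
      have h1 : h * c i ≤ rowSum B i := by
        calc h * c i ≤ h * (n:ℝ)^(m-1) := mul_le_mul_of_nonneg_left (hc_le i) hh_pos.le
          _ ≤ ((1 / (n:ℝ)^(m-1)) * rowSum B i) * (n:ℝ)^(m-1) :=
            mul_le_mul_of_nonneg_right (hh_bound i hi) hnpow_pos.le
          _ = rowSum B i := by field_simp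
      linarith
    have hB' : IsB0 B' := by
      intro i
      by_cases hiJ : i ∈ J
      · refine ⟨hrowJ i hiJ, ?_⟩
        intro f hf0 hfne
        by_cases hall : ∀ j, f j ∈ J
        · have hBf := (hB i).2 f hf0 hfne
          have he' : e f = 1 := he1 f hall
          have hcb : (1 / (n:ℝ)^(m-1)) * (h * c i) ≤ h := by
            have h1 : h * c i ≤ h * (n:ℝ)^(m-1) := mul_le_mul_of_nonneg_left (hc_le i) hh_pos.le
            have h2 : (1 / (n:ℝ)^(m-1)) * (h * c i) ≤ (1 / (n:ℝ)^(m-1)) * (h * (n:ℝ)^(m-1)) :=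
              mul_le_mul_of_nonneg_left h1 (by positivity)
            have h3 : (1 / (n:ℝ)^(m-1)) * (h * (n:ℝ)^(m-1)) = h := by field_simp
            linarith
          show B f - h * e f ≤ (1 / (n:ℝ)^(m-1)) * rowSum B' i
          rw [he', hrow' i, mul_one, mul_sub]
          linarith
        · have hBf : B f ≤ 0 := hneg f (by rw [hf0]; exact hfne) hall
          have he' : e f = 0 := he0 f hall
          show B f - h * e f ≤ (1 / (n:ℝ)^(m-1)) * rowSum B' i
          rw [he', mul_zero, sub_zero]
          have := hrowJ i hiJ
          have : 0 ≤ (1 / (n:ℝ)^(m-1)) * rowSum B' i := by positivity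
          linarith
      · have hre := hrow_eq i hiJ
        refine ⟨by rw [hre]; exact (hB i).1, ?_⟩
        intro f hf0 hfne
        have he' : e f = 0 := hc0 i hiJ f hf0
        show B f - h * e f ≤ (1 / (n:ℝ)^(m-1)) * rowSum B' i
        rw [he', mul_zero, sub_zero, hre]
        exact (hB i).2 f hf0 hfne
    have hsym' : IsSymmT B' := by
      intro σ f
      have he_sym : e (f ∘ σ) = e f := by
        simp only [hedef, allOne, Function.comp_apply]
        by_cases hall : ∀ j, f j ∈ J
        · rw [if_pos (fun j => hall (σ j)), if_pos hall]
        · rw [if_neg, if_neg hall]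
          intro hcon
          exact hall (fun j => by have := hcon (σ.symm j); simpa using this)
      show B (f ∘ σ) - h * e (f ∘ σ) = B f - h * e f
      rw [hsym σ f, he_sym]
    have hsub : hatJ B' ⊆ J := by
      intro i hi
      simp only [hatJ, Finset.mem_filter, Finset.mem_univ, true_and] at hi
      obtain ⟨f, hf0, hfne, hfpos⟩ := hi
      by_contra hiJ
      have he' : e f = 0 := hc0 i hiJ f hf0
      have hBB : B' f = B f := by
        show B f - h * e f = B f
        rw [he']; ring
      rw [hBB] at hfpos
      exact hiJ (by
        simp only [hJdef, hatJ, Finset.mem_filter, Finset.mem_univ, true_and]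
        exact ⟨f, hf0, hfne, hfpos⟩)
    have hi₀not : i₀ ∉ hatJ B' := by
      intro hcon
      simp only [hatJ, Finset.mem_filter, Finset.mem_univ, true_and] at hcon
      obtain ⟨f, hf0, hfne, hfpos⟩ := hcon
      have hB'f : B' f = B f - h * e f := rfl
      by_cases hall : ∀ j, f j ∈ J
      · have he' : e f = 1 := he1 f hall
        rw [hB'f, he', mul_one] at hfpos
        have hBf_pos : 0 < B f := by linarith
        have hfS : f ∈ S i₀ := by
          simp only [hSdef, Finset.mem_filter, Finset.mem_univ, true_and]
          exact ⟨hf0, hfne, hBf_pos⟩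
        have hub := hd_ub i₀ hi₀J f hfS
        have : h = d i₀ := by rw [hhdef, hi₀]
        linarith
      · have hBf : B f ≤ 0 := hneg f (by rw [hf0]; exact hfne) hall
        have he' : e f = 0 := he0 f hall
        rw [hB'f, he'] at hfpos
        linarith
    have hcard' : (hatJ B').card ≤ N := by
      have hss : hatJ B' ⊂ J := ⟨hsub, fun hJsub => hi₀not (hJsub hi₀J)⟩
      have hlt := Finset.card_lt_card hss
      omega
    have hpsd' := ih B' hcard' hsym' hB' x
    have hdecomp : tApply B x = tApply B' x + h * tApply e x := by
      unfold tApply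
      rw [Finset.mul_sum, ← Finset.sum_add_distrib]
      refine Finset.sum_congr rfl fun f _ => ?_
      show B f * _ = (B f - h * e f) * _ + h * (e f * _)
      ring
    rw [hdecomp, hedef, tApply_allOne]
    have hpow : 0 ≤ (∑ j ∈ J, x j) ^ m := hmeven.pow_nonneg _
    nlinarith [mul_nonneg hh_pos.le hpow]

/-- every H-eigenvalue of an even order symmetric B₀ tensor is nonnegative. -/
theorem even_symmetric_b0_tensor_H_eigenvalues_nonneg
    {m n : ℕ} [NeZero m] (hm : 2 ≤ m) (hmeven : Even m) (hn : 1 ≤ n)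
    (B : (Fin m → Fin n) → ℝ) (hsym : IsSymmT B) (hB : IsB0 B)
    (lam : ℝ) (x : Fin n → ℝ) (hx : x ≠ 0)
    (heig : ∀ i : Fin n, tVec B x i = lam * x i ^ (m - 1)) :
    0 ≤ lam := by
  have hpsd := b0_psd hmeven hn (hatJ B).card B le_rfl hsym hB x
  obtain ⟨i0, hi0⟩ : ∃ i, x i ≠ 0 := Function.ne_iff.1 hx
  have hm1 : m - 1 + 1 = m := by omega
  have hsum_pos : 0 < ∑ i, x i ^ m := by
    refine Finset.sum_pos' (fun i _ => hmeven.pow_nonneg _) ⟨i0, Finset.mem_univ _, ?_⟩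
    exact hmeven.pow_pos hi0
  have hkey : lam * ∑ i, x i ^ m = tApply B x := by
    rw [tApply_eq B x, Finset.mul_sum]
    refine Finset.sum_congr rfl fun i _ => ?_
    rw [heig i, show x i ^ m = x i * x i ^ (m-1) from by rw [← pow_succ', hm1]]
    ring
  nlinarith [hpsd, hsum_pos]
end

section
/- Let B be a real m-th order n-dimensional symmetric B₀ tensor, and let Ĵ(B) = { i ∈ {1,…,n} : B has at least one positive off-diagonal entry in its i-th row } be nonempty. For i ∈ Ĵ(B) let d_i be the largest off-diagonal entry in the i-th row of B, and set J₁ = Ĵ(B) and h₁ = min { d_i : i ∈ J₁ }. Then h₁ > 0 and B − h₁ E^{J₁} is again a symmetric B₀ tensor; moreover Ĵ(B − h₁ E^{J₁}) is a proper subset of Ĵ(B). -/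
open Finset

variable {m n : ℕ}

lemma mem_hatJ_iff [NeZero m] {B : (Fin m → Fin n) → ℝ} {i : Fin n} :
    i ∈ hatJ B ↔ ∃ f : Fin m → Fin n, f 0 = i ∧ f ≠ (fun _ => i) ∧ 0 < B f := by
  simp [hatJ]

lemma sum_allOne_row [NeZero m] (J : Finset (Fin n)) (i : Fin n) :
    ∑ f ∈ univ.filter (fun f : Fin m → Fin n => f 0 = i), allOne m J f
      = if i ∈ J then ((J.card : ℝ)) ^ (m - 1) else 0 := by
  classical
  set c : Fin m → Fin n → ℝ := fun j x =>
    if j = 0 then (if x = i ∧ x ∈ J then 1 else 0) else (if x ∈ J then 1 else 0) with hc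
  have key : ∀ f : Fin m → Fin n,
      (if f 0 = i then allOne m J f else 0) = ∏ j : Fin m, c j (f j) := by
    intro f
    by_cases h0 : f 0 = i
    · by_cases hall : ∀ j, f j ∈ J
      · have hiJ : i ∈ J := h0 ▸ hall 0
        have : ∀ j : Fin m, c j (f j) = 1 := by
          intro j
          by_cases hj : j = 0 <;> simp [hc, hj, hall j, h0, hiJ]
        simp [h0, allOne, hall, this]
      · push_neg at hall
        obtain ⟨j, hj⟩ := hall
        have : c j (f j) = 0 := by
          by_cases hj0 : j = 0
          · subst hj0; simp only [hc, if_pos rfl]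
            rw [if_neg]; exact fun h => hj h.2
          · simp [hc, hj0, hj]
        rw [if_pos h0, Finset.prod_eq_zero (Finset.mem_univ j) this]
        simp only [allOne, ite_eq_right_iff]
        intro h; exact absurd (h j) hj
    · have : c 0 (f 0) = 0 := by simp [hc, h0]
      rw [if_neg h0, Finset.prod_eq_zero (Finset.mem_univ 0) this]
  rw [Finset.sum_filter]
  calc ∑ f : Fin m → Fin n, (if f 0 = i then allOne m J f else 0)
      = ∑ f : Fin m → Fin n, ∏ j : Fin m, c j (f j) := by
        exact Finset.sum_congr rfl fun f _ => key f
    _ = ∏ j : Fin m, ∑ x : Fin n, c j x := by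
        rw [Finset.prod_univ_sum]
        rw [Fintype.piFinset_univ]
    _ = (∑ x : Fin n, c 0 x) * ∏ j ∈ (univ : Finset (Fin m)).erase 0, ∑ x : Fin n, c j x := by
        exact (Finset.mul_prod_erase _ _ (Finset.mem_univ (0 : Fin m))).symm
    _ = (if i ∈ J then 1 else 0) * ((J.card : ℝ)) ^ (m - 1) := by
        congr 1
        · simp only [hc, if_pos rfl]
          have : ∀ x : Fin n, (if x = i ∧ x ∈ J then (1:ℝ) else 0)
              = if x = i then (if i ∈ J then (1:ℝ) else 0) else 0 := by
            intro x; by_cases hx : x = i <;> simp [hx]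
          rw [Finset.sum_congr rfl fun x _ => this x,
            Finset.sum_ite_eq' univ i (fun _ => if i ∈ J then (1:ℝ) else 0)]
          simp
        · have h1 : ∀ j ∈ (univ : Finset (Fin m)).erase 0,
              (∑ x : Fin n, c j x) = (J.card : ℝ) := by
            intro j hj
            have hj0 : j ≠ 0 := (Finset.mem_erase.mp hj).1
            simp [hc, hj0]
          rw [Finset.prod_congr rfl h1, Finset.prod_const,
            Finset.card_erase_of_mem (Finset.mem_univ _), Finset.card_univ, Fintype.card_fin]
    _ = if i ∈ J then ((J.card : ℝ)) ^ (m - 1) else 0 := by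
        by_cases h : i ∈ J <;> simp [h]


lemma rowSum_sub_allOne [NeZero m] (B : (Fin m → Fin n) → ℝ) (J : Finset (Fin n))
    (h1 : ℝ) (i : Fin n) :
    rowSum (fun f => B f - h1 * allOne m J f) i
      = rowSum B i - h1 * (if i ∈ J then ((J.card : ℝ)) ^ (m - 1) else 0) := by
  unfold rowSum
  rw [Finset.sum_sub_distrib, ← Finset.mul_sum, sum_allOne_row]

lemma mixed_nonpos [NeZero m] {B : (Fin m → Fin n) → ℝ} (hsym : IsSymmT B)
    (f : Fin m → Fin n) (j : Fin m) (hjk : f j ∉ hatJ B) (hne : f 0 ≠ f j) :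
    B f ≤ 0 := by
  rw [mem_hatJ_iff] at hjk
  push_neg at hjk
  have hg := hjk (f ∘ (Equiv.swap 0 j)) (by simp [Equiv.swap_apply_left])
  rw [hsym] at hg
  refine hg ?_
  intro hconst
  have h2 : (f ∘ (Equiv.swap 0 j)) j = f j := by rw [hconst]
  simp only [Function.comp_apply, Equiv.swap_apply_right] at h2
  exact hne h2

/-- one step of the decomposition for a symmetric B₀ tensor `B` with
`Ĵ(B) ≠ ∅`: with `d i` the largest off-diagonal entry in row `i` and
`h₁ = min {d i : i ∈ Ĵ(B)}`, we have `h₁ > 0`, `B − h₁ E^{Ĵ(B)}` is again a symmetric B₀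
tensor, and `Ĵ(B − h₁ E^{Ĵ(B)}) ⊊ Ĵ(B)`. -/
theorem b0_tensor_decomposition_step
    {m n : ℕ} [NeZero m] (hm : 2 ≤ m) (hn : 1 ≤ n)
    (B : (Fin m → Fin n) → ℝ) (hsym : IsSymmT B) (hB : IsB0 B)
    (hne : (hatJ B).Nonempty) (d : Fin n → ℝ) (h1 : ℝ)
    (hd : ∀ i ∈ hatJ B,
      IsGreatest {y : ℝ | ∃ f : Fin m → Fin n, f 0 = i ∧ f ≠ (fun _ => i) ∧ B f = y} (d i))
    (hh : IsLeast {y : ℝ | ∃ i ∈ hatJ B, d i = y} h1) :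
    0 < h1 ∧ IsSymmT (fun f => B f - h1 * allOne m (hatJ B) f) ∧
      IsB0 (fun f => B f - h1 * allOne m (hatJ B) f) ∧
      hatJ (fun f => B f - h1 * allOne m (hatJ B) f) ⊂ hatJ B := by
  classical
  obtain ⟨i₀, hi₀J, hdi₀⟩ := hh.1
  have hh1pos : 0 < h1 := by
    obtain ⟨f, hf0, hfne, hfpos⟩ := mem_hatJ_iff.mp hi₀J
    have hle := (hd i₀ hi₀J).2 ⟨f, hf0, hfne, rfl⟩
    rw [hdi₀] at hle
    linarith
  have hn0 : (0:ℝ) < (n:ℝ) ^ (m-1) := by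
    have : (0:ℝ) < (n:ℝ) := by exact_mod_cast hn
    positivity
  have hcardn : ((hatJ B).card : ℝ) ≤ (n:ℝ) := by
    have := (hatJ B).card_le_univ
    rw [Fintype.card_fin] at this
    exact_mod_cast this
  have hcard : (((hatJ B).card : ℝ)) ^ (m-1) ≤ (n:ℝ)^(m-1) :=
    pow_le_pow_left₀ (by positivity) hcardn _
  have hrow : ∀ i ∈ hatJ B, (n:ℝ)^(m-1) * h1 ≤ rowSum B i := by
    intro i hi
    obtain ⟨⟨f, hf0, hfne, hfd⟩, hmax⟩ := hd i hi
    have h2 := (hB i).2 f hf0 hfne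
    rw [hfd] at h2
    have h3 : h1 ≤ d i := hh.2 ⟨i, hi, rfl⟩
    have h4 : (n:ℝ)^(m-1) * ((1/(n:ℝ)^(m-1)) * rowSum B i) = rowSum B i := by
      field_simp
    nlinarith [mul_le_mul_of_nonneg_left h2 hn0.le, mul_le_mul_of_nonneg_left h3 hn0.le]
  have hallnn : ∀ f : Fin m → Fin n, 0 ≤ allOne m (hatJ B) f := by
    intro f; unfold allOne; split_ifs <;> norm_num
  have hsym' : IsSymmT (fun f => B f - h1 * allOne m (hatJ B) f) := by
    intro σ f
    simp only
    rw [hsym]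
    have hiff : (∀ j, (f ∘ σ) j ∈ hatJ B) ↔ ∀ j, f j ∈ hatJ B :=
      ⟨fun h j => by simpa using h (σ.symm j), fun h j => h _⟩
    unfold allOne
    rw [if_congr hiff rfl rfl]
  -- key: B' f ≤ 0 whenever f is off-diagonal in a row i ∈ hatJ B with f 0 = i₀-like min row,
  -- handled inline below.
  have hsub : hatJ (fun f => B f - h1 * allOne m (hatJ B) f) ⊆ hatJ B := by
    intro i hi
    obtain ⟨f, hf0, hfne, hfpos⟩ := mem_hatJ_iff.mp hi
    by_contra hiJ
    have h0 : B f ≤ 0 := by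
      rw [mem_hatJ_iff] at hiJ; push_neg at hiJ
      exact hiJ f hf0 hfne
    have : B f - h1 * allOne m (hatJ B) f ≤ 0 := by
      nlinarith [hallnn f]
    exact absurd hfpos (not_lt.mpr this)
  have hB' : IsB0 (fun f => B f - h1 * allOne m (hatJ B) f) := by
    intro i
    by_cases hiJ : i ∈ hatJ B
    · have hr : rowSum (fun f => B f - h1 * allOne m (hatJ B) f) i
          = rowSum B i - h1 * (((hatJ B).card : ℝ)) ^ (m-1) := by
        rw [rowSum_sub_allOne, if_pos hiJ]
      have hge : 0 ≤ rowSum (fun f => B f - h1 * allOne m (hatJ B) f) i := by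
        rw [hr]; nlinarith [hrow i hiJ]
      refine ⟨hge, ?_⟩
      intro f hf0 hfne
      by_cases hall : ∀ j, f j ∈ hatJ B
      · have hEf : allOne m (hatJ B) f = 1 := if_pos hall
        have h2 := (hB i).2 f hf0 hfne
        simp only [hEf, mul_one, hr]
        have key : (1/(n:ℝ)^(m-1)) * (h1 * (((hatJ B).card : ℝ))^(m-1)) ≤ h1 := by
          rw [div_mul_eq_mul_div, one_mul, div_le_iff₀ hn0]
          nlinarith
        nlinarith
      · push_neg at hall; obtain ⟨j, hjJ⟩ := hall
        have hne2 : f 0 ≠ f j := by rw [hf0]; exact fun h => hjJ (h ▸ hiJ)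
        have hBf : B f ≤ 0 := mixed_nonpos hsym f j hjJ hne2
        have hEf : allOne m (hatJ B) f = 0 := if_neg (fun h => hjJ (h j))
        simp only [hEf, mul_zero, sub_zero]
        have hN : 0 ≤ (1/(n:ℝ)^(m-1)) := by positivity
        nlinarith [mul_nonneg hN hge]
    · have hr : rowSum (fun f => B f - h1 * allOne m (hatJ B) f) i = rowSum B i := by
        rw [rowSum_sub_allOne, if_neg hiJ]; ring
      refine ⟨hr ▸ (hB i).1, ?_⟩
      intro f hf0 hfne
      have hEf : allOne m (hatJ B) f = 0 := if_neg (fun h => hiJ (hf0 ▸ h 0))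
      simp only [hEf, mul_zero, sub_zero, hr]
      exact (hB i).2 f hf0 hfne
  refine ⟨hh1pos, hsym', hB', ?_⟩
  rw [Finset.ssubset_def]
  refine ⟨hsub, fun hJsub => ?_⟩
  have hi₀' := hJsub hi₀J
  obtain ⟨f, hf0, hfne, hfpos⟩ := mem_hatJ_iff.mp hi₀'
  by_cases hall : ∀ j, f j ∈ hatJ B
  · have hle : B f ≤ d i₀ := (hd i₀ hi₀J).2 ⟨f, hf0, hfne, rfl⟩
    have hEf : allOne m (hatJ B) f = 1 := if_pos hall
    rw [hEf] at hfpos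
    rw [hdi₀] at hle
    linarith
  · push_neg at hall; obtain ⟨j, hjJ⟩ := hall
    have hne2 : f 0 ≠ f j := by rw [hf0]; exact fun h => hjJ (h ▸ hi₀J)
    have hBf : B f ≤ 0 := mixed_nonpos hsym f j hjJ hne2
    have hEf : allOne m (hatJ B) f = 0 := if_neg (fun h => hjJ (h j))
    rw [hEf] at hfpos
    linarith
end
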